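/- For integers m > 2 and k ≥ 1, msum(mk−1, k) ≥ k/2. That is, for every permutation π of {1,...,mk−1}, the maximum cyclic k-consecutive sum of π is at least k·mk/2 + k/2. -/
import Mathlib


/-- The cyclic `k`-consecutive sum of the permutation `π` of `{1,…,n}`
(realized as `Equiv.Perm (Fin n)` with values `π i + 1 ∈ {1,…,n}`) starting at position `i`. -/
def ksum (n k : ℕ) (π : Equiv.Perm (Fin n)) (i : ℕ) : ℕ :=
  ∑ j ∈ Finset.range k,
    if h : (i + j) % n < n then ((π ⟨(i + j) % n, h⟩ : ℕ) + 1) else 0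

/-- The maximal cyclic `k`-consecutive sum of `π`. -/
def maxksum (n k : ℕ) (π : Equiv.Perm (Fin n)) : ℕ :=
  Finset.sup (Finset.range n) (ksum n k π)

/-- `msum n k` : minimum over permutations of `max_i s_i - k(n+1)/2`. -/
noncomputable def msum (n k : ℕ) : ℚ :=
  Finset.inf' (Finset.univ : Finset (Equiv.Perm (Fin n))) ⟨1, Finset.mem_univ 1⟩
    (fun π => (maxksum n k π : ℚ) - (k : ℚ) * ((n : ℚ) + 1) / 2)

/-- `disc n k` : minimum over permutations of `max_i |s_i - k(n+1)/2|`
(computed as `max_i |2 s_i - k(n+1)| / 2`). -/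
noncomputable def disc (n k : ℕ) : ℚ :=
  Finset.inf' (Finset.univ : Finset (Equiv.Perm (Fin n))) ⟨1, Finset.mem_univ 1⟩
    (fun π => ((Finset.sup (Finset.range n)
        (fun i => ((2 * (ksum n k π i : ℤ)) - (k : ℤ) * ((n : ℤ) + 1)).natAbs) : ℕ) : ℚ) / 2)

lemma ksum_mod (n k : ℕ) (π : Equiv.Perm (Fin n)) (a : ℕ) :
    ksum n k π (a % n) = ksum n k π a := by
  unfold ksum
  refine Finset.sum_congr rfl fun j _ => ?_
  rw [Nat.mod_add_mod]

lemma sum_blocks (g : ℕ → ℕ) (m k : ℕ) :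
    ∑ j ∈ Finset.range (m * k), g j
      = ∑ t ∈ Finset.range m, ∑ j ∈ Finset.range k, g (t * k + j) := by
  induction m with
  | zero => simp
  | succ m ih =>
    rw [Finset.sum_range_succ, ← ih, Nat.succ_mul, Finset.sum_range_add]

lemma key' (m k n : ℕ) (hm : 2 < m) (hk : 1 ≤ k) (hn1 : n + 1 = m * k)
    (π : Equiv.Perm (Fin n)) :
    m * k * k + k ≤ 2 * maxksum n k π := by
  have hA : 3 ≤ m * k := le_trans (by norm_num) (Nat.mul_le_mul hm hk)
  have hnpos : 0 < n := by omega
  haveI : NeZero n := ⟨by omega⟩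
  set M := maxksum n k π with hM
  set i : ℕ := ((π.symm ⟨n - 1, by omega⟩ : Fin n) : ℕ) with hi
  have hilt : i < n := Fin.is_lt _
  set g : ℕ → ℕ := fun j =>
    if h : (i + j) % n < n then ((π ⟨(i + j) % n, h⟩ : ℕ) + 1) else 0 with hg
  have hgval : ∀ j, g j = (π ⟨(i + j) % n, Nat.mod_lt _ hnpos⟩ : ℕ) + 1 :=
    fun j => dif_pos (Nat.mod_lt _ hnpos)
  -- each block sum is a ksum
  have hblock : ∀ t, ∑ j ∈ Finset.range k, g (t * k + j) = ksum n k π (i + t * k) := by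
    intro t
    unfold ksum
    refine Finset.sum_congr rfl fun j _ => ?_
    rw [hgval, dif_pos (Nat.mod_lt _ hnpos)]
    have hidx : i + t * k + j = i + (t * k + j) := by ring
    have h6 : (⟨(i + (t * k + j)) % n, Nat.mod_lt _ hnpos⟩ : Fin n)
        = (⟨(i + t * k + j) % n, Nat.mod_lt _ hnpos⟩ : Fin n) := Fin.ext (by rw [hidx])
    rw [h6]
  -- each ksum ≤ M
  have hksum_le : ∀ a : ℕ, ksum n k π a ≤ M := by
    intro a
    rw [← ksum_mod]
    exact Finset.le_sup (Finset.mem_range.mpr (Nat.mod_lt _ hnpos))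
  -- total sum over a full cycle
  have hfull : ∑ j ∈ Finset.range n, g j = ∑ j ∈ Finset.range n, (j + 1) := by
    rw [← Fin.sum_univ_eq_sum_range g n, ← Fin.sum_univ_eq_sum_range (fun j => j + 1) n]
    set c : Fin n := ⟨i, hilt⟩ with hc
    have h1 : ∀ x : Fin n, g x = (π (c + x) : ℕ) + 1 := by
      intro x
      rw [hgval]
      congr 1
    simp_rw [h1]
    exact (Equiv.sum_comp (Equiv.addLeft c) (fun y => (π y : ℕ) + 1)).trans
      (Equiv.sum_comp π (fun y => (y : ℕ) + 1))
  have hgauss : 2 * ∑ j ∈ Finset.range n, (j + 1) = n * (n + 1) := by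
    have h1 := Finset.sum_range_id_mul_two (n + 1)
    have hshift : ∑ j ∈ Finset.range (n + 1), j = ∑ j ∈ Finset.range n, (j + 1) := by
      rw [Finset.sum_range_succ' (fun j => j) n, add_zero]
    calc 2 * ∑ j ∈ Finset.range n, (j + 1)
        = (∑ j ∈ Finset.range (n + 1), j) * 2 := by rw [hshift]; ring
      _ = (n + 1) * (n + 1 - 1) := h1
      _ = n * (n + 1) := by rw [Nat.add_sub_cancel]; ring
  have hgn : g n = n := by
    have h2 : (i + n) % n = i := by rw [Nat.add_mod_right, Nat.mod_eq_of_lt hilt]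
    rw [hgval]
    have h3 : (⟨(i + n) % n, Nat.mod_lt _ hnpos⟩ : Fin n) = π.symm ⟨n - 1, by omega⟩ :=
      Fin.ext h2
    rw [h3, Equiv.apply_symm_apply]
    simp only [Fin.val_mk]
    omega
  -- main counting
  have hmain : ∑ j ∈ Finset.range (m * k), g j ≤ m * M := by
    rw [sum_blocks]
    calc ∑ t ∈ Finset.range m, ∑ j ∈ Finset.range k, g (t * k + j)
        ≤ ∑ _t ∈ Finset.range m, M := by
          refine Finset.sum_le_sum fun t _ => ?_
          rw [hblock t]; exact hksum_le _
      _ = m * M := by rw [Finset.sum_const, Finset.card_range, smul_eq_mul]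
  have hsplit : ∑ j ∈ Finset.range (m * k), g j
      = (∑ j ∈ Finset.range n, g j) + g n := by
    rw [← hn1, Finset.sum_range_succ]
  have hineq : n * (n + 1) + 2 * n ≤ 2 * (m * M) := by
    have h := hmain
    rw [hsplit, hfull, hgn] at h
    omega
  have hid : m * (m * k * k + k) = n * (n + 1) + 2 * n + 2 := by
    have h : m * (m * k * k + k) = (m * k) * (m * k) + m * k := by ring
    rw [h, ← hn1]
    ring
  have hineq2 : m * (m * k * k + k) ≤ 2 * (m * M) + 2 := by omega
  have hfin : m * k * k + k ≤ 2 * M := by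
    by_contra hcon
    push_neg at hcon
    have h3 : 2 * M + 1 ≤ m * k * k + k := hcon
    have h4 : m * (2 * M + 1) ≤ m * (m * k * k + k) := Nat.mul_le_mul_left m h3
    have h5 : m * (2 * M + 1) = 2 * (m * M) + m := by ring
    linarith
  exact hfin

lemma key (m k : ℕ) (hm : 2 < m) (hk : 1 ≤ k) (π : Equiv.Perm (Fin (m * k - 1))) :
    m * k * k + k ≤ 2 * maxksum (m * k - 1) k π := by
  have hA : 3 ≤ m * k := le_trans (by norm_num) (Nat.mul_le_mul hm hk)
  exact key' m k (m * k - 1) hm hk (by omega) π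

theorem stmt7 (m k : ℕ) (hm : 2 < m) (hk : 1 ≤ k) :
    (k : ℚ) / 2 ≤ msum (m * k - 1) k ∧
    ∀ π : Equiv.Perm (Fin (m * k - 1)),
      (k : ℚ) * ((m : ℚ) * k) / 2 + (k : ℚ) / 2 ≤ (maxksum (m * k - 1) k π : ℚ) := by
  have hA : 3 ≤ m * k := le_trans (by norm_num) (Nat.mul_le_mul hm hk)
  have main : ∀ π : Equiv.Perm (Fin (m * k - 1)),
      (k : ℚ) * ((m : ℚ) * k) / 2 + (k : ℚ) / 2 ≤ (maxksum (m * k - 1) k π : ℚ) := by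
    intro π
    have h := key m k hm hk π
    have hq : ((m * k * k + k : ℕ) : ℚ) ≤ ((2 * maxksum (m * k - 1) k π : ℕ) : ℚ) :=
      Nat.cast_le.mpr h
    push_cast at hq
    linarith
  refine ⟨?_, main⟩
  apply Finset.le_inf'
  intro π _
  have h := main π
  have hcast : ((m * k - 1 : ℕ) : ℚ) + 1 = (m : ℚ) * k := by
    have h1 : ((m * k - 1 : ℕ) : ℚ) = ((m * k : ℕ) : ℚ) - 1 := by
      rw [Nat.cast_sub (by omega)]; norm_num
    rw [h1]; push_cast; ring
  rw [hcast]
  linarith
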